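/- Let X be a real n×p matrix with singular value decomposition X = U S V^T (U^T U = I_p, S diagonal p×p, V orthogonal p×p), let λ, c₁, c₂ be real numbers, and define X̂ = (V (S² − λ I))^T and Ŷ = V^T. Let C ⊆ ℝ^p × ℝ^p be the feasible set C = {(u, v) : ‖u‖₂² ≤ 1, ‖v‖₂² ≤ 1, ‖u‖₁ ≤ c₁, ‖v‖₁ ≤ c₂}. Then a pair (u, v) ∈ C maximizes the CAA objective u^T X^T X v − λ u^T v over C if and only if (u, v) maximizes the Sparse CCA objective u^T X̂^T Ŷ v over C. -/
import Mathlib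


open Matrix

/-- Theorem 1 of the paper: Over the feasible set
    C = {(u,v) : ‖u‖₂² ≤ 1, ‖v‖₂² ≤ 1, ‖u‖₁ ≤ c₁, ‖v‖₁ ≤ c₂},
    a pair (u,v) ∈ C maximizes the CAA objective uᵀXᵀXv − λuᵀv iff it maximizes the
    Sparse CCA objective uᵀX̂ᵀŶv, where X̂ = (V(S² − λI))ᵀ and Ŷ = Vᵀ. -/
theorem caa_equiv_sparse_cca (n p : ℕ) (X : Matrix (Fin n) (Fin p) ℝ)
    (U : Matrix (Fin n) (Fin p) ℝ) (S V : Matrix (Fin p) (Fin p) ℝ) (lam c₁ c₂ : ℝ)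
    (hU : Uᵀ * U = 1) (hS : S.IsDiag) (hV₁ : Vᵀ * V = 1) (hV₂ : V * Vᵀ = 1)
    (hX : X = U * S * Vᵀ)
    (Xhat Yhat : Matrix (Fin p) (Fin p) ℝ)
    (hXhat : Xhat = (V * (S * S - lam • (1 : Matrix (Fin p) (Fin p) ℝ)))ᵀ)
    (hYhat : Yhat = Vᵀ)
    (C : Set ((Fin p → ℝ) × (Fin p → ℝ)))
    (hC : C = {uv | (∑ i, uv.1 i ^ 2) ≤ 1 ∧ (∑ i, uv.2 i ^ 2) ≤ 1 ∧
                    (∑ i, |uv.1 i|) ≤ c₁ ∧ (∑ i, |uv.2 i|) ≤ c₂})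
    (u v : Fin p → ℝ) (huv : (u, v) ∈ C) :
    (∀ uv ∈ C, uv.1 ⬝ᵥ ((Xᵀ * X).mulVec uv.2) - lam * (uv.1 ⬝ᵥ uv.2)
        ≤ u ⬝ᵥ ((Xᵀ * X).mulVec v) - lam * (u ⬝ᵥ v))
    ↔ (∀ uv ∈ C, uv.1 ⬝ᵥ ((Xhatᵀ * Yhat).mulVec uv.2)
        ≤ u ⬝ᵥ ((Xhatᵀ * Yhat).mulVec v)) := by
  have hkey : Xhatᵀ * Yhat = Xᵀ * X - lam • (1 : Matrix (Fin p) (Fin p) ℝ) := by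
    subst hXhat hYhat hX
    have hSt : Sᵀ = S := hS.isSymm
    simp only [Matrix.transpose_transpose, Matrix.transpose_mul, hSt,
      Matrix.transpose_sub, Matrix.transpose_smul, Matrix.transpose_one]
    rw [Matrix.mul_sub, Matrix.sub_mul, Matrix.mul_smul, Matrix.smul_mul, Matrix.mul_one, hV₂]
    congr 1
    calc V * (S * S) * Vᵀ
        = V * S * (Uᵀ * U) * (S * Vᵀ) := by rw [hU, Matrix.mul_one]; simp only [Matrix.mul_assoc]
      _ = V * (S * Uᵀ) * (U * S * Vᵀ) := by simp only [Matrix.mul_assoc]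
  have hobj : ∀ a b : Fin p → ℝ,
      a ⬝ᵥ ((Xhatᵀ * Yhat).mulVec b) = a ⬝ᵥ ((Xᵀ * X).mulVec b) - lam * (a ⬝ᵥ b) := by
    intro a b
    rw [hkey, Matrix.sub_mulVec, dotProduct_sub, Matrix.smul_mulVec,
      Matrix.one_mulVec, dotProduct_smul, smul_eq_mul]
  constructor <;> intro h uv hm <;> have := h uv hm <;>
    simp only [hobj] at * <;> linarith
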